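/- Let m ≥ 4 and q = 2^m. For any r ∈ F_q with r ∉ F₄, setting b = (r+1)³/(r³+1) ∈ F_q, the function F₁ : F_{q²} → F_{q²} given by F₁(x) = x^{3q} + (b² + b)x^{2q+1} + (b+1)²x^{q+2} is affine equivalent to G₁(x) = x³. In fact, with L₁(x) = x^q + rx and L₂(x) = r³x^q + x, one has L₂(G₁(L₁(x))) = (r⁶+1)·F₁(x) for all x ∈ F_{q²}, and L₁, L₂ are bijections of F_{q²}. -/

import Mathlib

/-- `f` is almost perfect nonlinear (APN): for every `a ≠ 0` and every `b`, the equation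
`f (x + a) + f x = b` has at most two solutions `x`. -/
def IsAPN {F : Type*} [Field F] (f : F → F) : Prop :=
  ∀ a : F, a ≠ 0 → ∀ b : F, {x : F | f (x + a) + f x = b}.ncard ≤ 2

/-- `L` is an affine permutation: it is bijective and `x ↦ L x - L 0` is additive
(over a field of characteristic 2, additive maps are exactly the `𝔽₂`-linear ones). -/
def IsAffinePerm {F : Type*} [Field F] (L : F → F) : Prop :=
  Function.Bijective L ∧ ∀ x y : F, L (x + y) + L 0 = L x + L y

/-- `f` and `g` are affine equivalent: `g = L₁ ∘ f ∘ L₂` for affine permutations `L₁, L₂`. -/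
def AffEquiv {F : Type*} [Field F] (f g : F → F) : Prop :=
  ∃ L₁ L₂ : F → F, IsAffinePerm L₁ ∧ IsAffinePerm L₂ ∧ ∀ x : F, g x = L₁ (f (L₂ x))

/-!
Raising to the power `q` is an involutive automorphism `σ` of `𝔽_{q²}` fixing `𝔽_q`. A map
`x ↦ a σ(x) + c x` with `a, c ∈ 𝔽_q` is additive, and combining the equation `a σ(x) + c x = 0`
with its image under `σ` gives `(a² - c²) σ(x) = 0`; so `L₁` and `L₂` are additive permutations
as soon as `r ∉ 𝔽₄`. The identity `L₂(L₁(x)³) = (r⁶ + 1) F₁(x)` is a polynomial identity in `x`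
and `σ(x)` in characteristic 2, and then `y ↦ L₂⁻¹((r⁶ + 1) y)` and `L₁⁻¹` carry `F₁` to `x³`.
-/

section Field

variable {F : Type*} [Field F]

lemma AddEquiv.isAffinePerm (e : F ≃+ F) : IsAffinePerm e :=
  ⟨e.bijective, fun x y => by rw [map_add, map_zero, add_zero]⟩

lemma affEquiv_of_addEquiv_comp_eq_mul {f g : F → F} (e₁ e₂ : F ≃+ F) {c : F} (hc : c ≠ 0)
    (h : ∀ x, e₂ (g (e₁ x)) = c * f x) : AffEquiv f g := by
  refine ⟨(DistribMulAction.toAddEquiv₀ F c hc).trans e₂.symm, e₁.symm,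
    AddEquiv.isAffinePerm _, AddEquiv.isAffinePerm _, fun y => ?_⟩
  have hy := h (e₁.symm y)
  rw [AddEquiv.apply_symm_apply] at hy
  exact (e₂.symm_apply_apply (g y)).symm.trans (congrArg e₂.symm hy)

def linearizedBinomial (σ : F →+* F) (a c : F) : F →+ F :=
  (AddMonoidHom.mulLeft a).comp σ.toAddMonoidHom + AddMonoidHom.mulLeft c

@[simp]
lemma linearizedBinomial_apply (σ : F →+* F) (a c x : F) :
    linearizedBinomial σ a c x = a * σ x + c * x := rfl

lemma linearizedBinomial_injective {σ : F →+* F} (hσ : Function.Involutive σ) {a c : F}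
    (ha : σ a = a) (hc : σ c = c) (hac : a ^ 2 ≠ c ^ 2) :
    Function.Injective (linearizedBinomial σ a c) := by
  refine (injective_iff_map_eq_zero _).2 fun x hx => ?_
  rw [linearizedBinomial_apply] at hx
  have hσx : a * x + c * σ x = 0 := by
    simpa [ha, hc, hσ x] using congrArg σ hx
  have : (a ^ 2 - c ^ 2) * σ x = 0 := by linear_combination a * hx - c * hσx
  simpa using (mul_eq_zero.1 this).resolve_left (sub_ne_zero.2 hac) |> congrArg σ

lemma pow_pow_eq_self_of_card_eq_sq [Fintype F] {q : ℕ} (hq : Fintype.card F = q ^ 2) (x : F) :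
    (x ^ q) ^ q = x := by
  rw [← pow_mul, ← sq, ← hq, FiniteField.pow_card]

lemma linearizedBinomial_cube_eq [CharP F 2] {σ : F →+* F} (hσ : Function.Involutive σ)
    {r b : F} (hr : σ r = r) (hb : (r ^ 3 + 1) * b = (r + 1) ^ 3) (x : F) :
    linearizedBinomial σ (r ^ 3) 1 (linearizedBinomial σ 1 r x ^ 3)
      = (r ^ 6 + 1) * (σ x ^ 3 + (b ^ 2 + b) * σ x ^ 2 * x + (b + 1) ^ 2 * σ x * x ^ 2) := by
  simp only [linearizedBinomial_apply, map_pow, map_add, map_mul, hσ x, hr, one_mul]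
  -- in characteristic 2, `r⁶ + 1 = (r³ + 1)²` and `(r³ + 1)(b + 1) = r² + r`
  have h₁ : (r ^ 6 + 1) * (b ^ 2 + b) = r ^ 5 + r := by grind
  have h₂ : (r ^ 6 + 1) * (b + 1) ^ 2 = r ^ 4 + r ^ 2 := by grind
  calc r ^ 3 * (x + r * σ x) ^ 3 + (σ x + r * x) ^ 3
      = (r ^ 6 + 1) * σ x ^ 3 + (r ^ 5 + r) * σ x ^ 2 * x + (r ^ 4 + r ^ 2) * σ x * x ^ 2 := by
        grind
    _ = _ := by rw [← h₁, ← h₂]; ring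

end Field

theorem F1_equiv_G1_general
    (m : ℕ) (F : Type*) [Field F] [Fintype F]
    (hcard : Fintype.card F = 2 ^ (2 * m))
    (r : F) (hr : r ^ (2 ^ m) = r) (hr4 : r ^ 4 ≠ r)
    (b : F) (hb : b = (r + 1) ^ 3 / (r ^ 3 + 1))
    (F₁ L₁ L₂ : F → F)
    (hF₁ : ∀ x : F, F₁ x = x ^ (3 * 2 ^ m) + (b ^ 2 + b) * x ^ (2 * 2 ^ m + 1)
        + (b + 1) ^ 2 * x ^ (2 ^ m + 2))
    (hL₁ : ∀ x : F, L₁ x = x ^ (2 ^ m) + r * x)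
    (hL₂ : ∀ x : F, L₂ x = r ^ 3 * x ^ (2 ^ m) + x) :
    AffEquiv F₁ (fun x : F => x ^ 3) ∧
    (∀ x : F, L₂ ((L₁ x) ^ 3) = (r ^ 6 + 1) * F₁ x) ∧
    Function.Bijective L₁ ∧ Function.Bijective L₂ := by
  have : CharP F 2 := charP_of_card_eq_prime_pow hcard
  set σ := iterateFrobenius F 2 m
  have hσ : Function.Involutive σ :=
    pow_pow_eq_self_of_card_eq_sq (by rw [hcard, ← pow_mul, mul_comm])
  have hσr : σ r = r := hr
  have hr3 : r ^ 3 ≠ 1 := fun h => hr4 (by rw [pow_succ, h, one_mul])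
  have hr6 : r ^ 6 + 1 ≠ 0 := by
    rwa [Ne, CharTwo.add_eq_zero, show 6 = 3 * 2 by rfl, pow_mul, ← one_pow 2, CharTwo.sq_inj]
  obtain rfl : L₁ = linearizedBinomial σ 1 r :=
    funext fun x => by simp [hL₁, σ, iterateFrobenius_def]
  obtain rfl : L₂ = linearizedBinomial σ (r ^ 3) 1 :=
    funext fun x => by simp [hL₂, σ, iterateFrobenius_def]
  have hbij₁ : Function.Bijective (linearizedBinomial σ 1 r) :=
    Finite.injective_iff_bijective.1 <| linearizedBinomial_injective hσ (map_one σ) hσr <| by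
      rw [one_pow, ← one_pow 2, Ne, CharTwo.sq_inj]; rintro rfl; simp at hr3
  have hbij₂ : Function.Bijective (linearizedBinomial σ (r ^ 3) 1) :=
    Finite.injective_iff_bijective.1 <|
      linearizedBinomial_injective hσ (by rw [map_pow, hσr]) (map_one σ) <| by
        rwa [Ne, CharTwo.sq_inj]
  have hmain : ∀ x, linearizedBinomial σ (r ^ 3) 1 (linearizedBinomial σ 1 r x ^ 3)
      = (r ^ 6 + 1) * F₁ x := by
    intro x
    have hb' : (r ^ 3 + 1) * b = (r + 1) ^ 3 := by
      rw [hb, mul_div_cancel₀]; rwa [Ne, CharTwo.add_eq_zero]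
    rw [linearizedBinomial_cube_eq hσ hσr hb', hF₁, iterateFrobenius_def]
    ring
  exact ⟨affEquiv_of_addEquiv_comp_eq_mul (AddEquiv.ofBijective _ hbij₁)
    (AddEquiv.ofBijective _ hbij₂) hr6 hmain, hmain, hbij₁, hbij₂⟩

/-- For `r ∈ 𝔽_q \ 𝔽₄` (expressed as `r^(2^m) = r` and `r⁴ ≠ r`), with
`b = (r+1)³/(r³+1)`, the function `F₁(x) = x^{3q} + (b²+b)x^{2q+1} + (b+1)²x^{q+2}` is
affine equivalent to `G₁(x) = x³`; moreover with `L₁(x) = x^q + rx`, `L₂(x) = r³x^q + x`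
one has `L₂(G₁(L₁(x))) = (r⁶+1)·F₁(x)` and `L₁, L₂` are bijections. Here `q = 2^m`. -/
theorem F1_equiv_G1
    (m : ℕ) (hm : 4 ≤ m) (F : Type*) [Field F] [Fintype F]
    (hcard : Fintype.card F = 2 ^ (2 * m))
    (r : F) (hr : r ^ (2 ^ m) = r) (hr4 : r ^ 4 ≠ r)
    (b : F) (hb : b = (r + 1) ^ 3 / (r ^ 3 + 1))
    (F₁ L₁ L₂ : F → F)
    (hF₁ : ∀ x : F, F₁ x = x ^ (3 * 2 ^ m) + (b ^ 2 + b) * x ^ (2 * 2 ^ m + 1)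
        + (b + 1) ^ 2 * x ^ (2 ^ m + 2))
    (hL₁ : ∀ x : F, L₁ x = x ^ (2 ^ m) + r * x)
    (hL₂ : ∀ x : F, L₂ x = r ^ 3 * x ^ (2 ^ m) + x) :
    AffEquiv F₁ (fun x : F => x ^ 3) ∧
    (∀ x : F, L₂ ((L₁ x) ^ 3) = (r ^ 6 + 1) * F₁ x) ∧
    Function.Bijective L₁ ∧ Function.Bijective L₂ :=
  F1_equiv_G1_general m F hcard r hr hr4 b hb F₁ L₁ L₂ hF₁ hL₁ hL₂
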